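/- There exist two neighbourhood models and a monotone bisimulation S between them containing a pair (x₁, x₂) such that x₂ lies in a submodel all of whose states satisfy an atom p, but x₁ does not lie in any such submodel. Concretely: let W₁ = {x₁,u₁,v₁₁,v₁₂} with N₁(a,x₁) = {{u₁,v₁₁},{v₁₁,v₁₂}} and N₁ empty otherwise, W₂ = {x₂,u₂,v₂} with N₂(a,x₂) = {{v₂}} and N₂ empty otherwise, I₁(p) = {x₁,v₁₁,v₁₂}, I₂(p) = {x₂,v₂}. Then S = {(x₁,x₂),(u₁,u₂),(v₁₁,v₂),(v₁₂,v₂)} is a monotone bisimulation, and the inclusion of W₂' = {x₂,v₂} into W₂ (with the restricted neighbourhood structure) is a monotone bisimulation with all states of W₂' satisfying p, while no subset W₁' ⊆ W₁ containing x₁ with all states satisfying p has the property that its inclusion (with restricted neighbourhoods consisting of the members of N₁ contained in W₁') is a monotone bisimulation into W₁. -/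
import Mathlib


/-- A monotone bisimulation between neighbourhood models `(W₁,N₁,I₁)` and
`(W₂,N₂,I₂)` over actions `Act` and atoms `At`. -/
def MonBisim {W₁ W₂ Act At : Type*}
    (N₁ : Act × W₁ → Set (Set W₁)) (N₂ : Act × W₂ → Set (Set W₂))
    (I₁ : At → Set W₁) (I₂ : At → Set W₂) (S : Set (W₁ × W₂)) : Prop :=
  ∀ x y, (x, y) ∈ S →
    (∀ (a : Act) (A : Set W₁), A ∈ N₁ (a, x) →
      ∃ B ∈ N₂ (a, y), ∀ v ∈ B, ∃ u ∈ A, (u, v) ∈ S) ∧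
    (∀ (a : Act) (B : Set W₂), B ∈ N₂ (a, y) →
      ∃ A ∈ N₁ (a, x), ∀ u ∈ A, ∃ v ∈ B, (u, v) ∈ S) ∧
    (∀ p : At, x ∈ I₁ p ↔ y ∈ I₂ p)

/-- Restriction of a neighbourhood function to a subset `W'` of the states:
the neighbourhoods are the members of the original neighbourhood system
contained in `W'`. -/
def restrictN {W Act : Type*} (N : Act × W → Set (Set W)) (W' : Set W) :
    Act × ↥W' → Set (Set ↥W') :=
  fun aw => {A : Set ↥W' | Subtype.val '' A ∈ N (aw.1, (aw.2 : W))}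

/-- Restriction of an atom interpretation to a subset of the states. -/
def restrictI {W At : Type*} (I : At → Set W) (W' : Set W) : At → Set ↥W' :=
  fun p => {x : ↥W' | (x : W) ∈ I p}

/-- The graph of the inclusion `W' ↪ W`. -/
def inclGraph {W : Type*} (W' : Set W) : Set (↥W' × W) :=
  {q | (q.1 : W) = q.2}

/-- The models of the counterexample: states `Fin 4` resp. `Fin 3` with
`x₁ = 0, u₁ = 1, v₁₁ = 2, v₁₂ = 3` and `x₂ = 0, u₂ = 1, v₂ = 2`;
one action and one atom `p`. -/
def N₁ : Unit × Fin 4 → Set (Set (Fin 4)) :=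
  fun aw => if aw.2 = 0 then {{1, 2}, {2, 3}} else ∅

def N₂ : Unit × Fin 3 → Set (Set (Fin 3)) :=
  fun aw => if aw.2 = 0 then {{2}} else ∅

def I₁ : Unit → Set (Fin 4) := fun _ => {0, 2, 3}

def I₂ : Unit → Set (Fin 3) := fun _ => {0, 2}

theorem submodel_modality_not_expressible :
    -- S is a monotone bisimulation relating x₁ = 0 and x₂ = 0
    MonBisim N₁ N₂ I₁ I₂ {(0, 0), (1, 1), (2, 2), (3, 2)} ∧
    -- x₂ lies in the submodel W₂' = {x₂, v₂} = {0, 2}, all of whose states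
    -- satisfy p, and whose inclusion is a monotone bisimulation
    ((0 : Fin 3) ∈ ({0, 2} : Set (Fin 3)) ∧
      (∀ y ∈ ({0, 2} : Set (Fin 3)), y ∈ I₂ ()) ∧
      MonBisim (restrictN N₂ {0, 2}) N₂ (restrictI I₂ {0, 2}) I₂
        (inclGraph ({0, 2} : Set (Fin 3)))) ∧
    -- but x₁ = 0 lies in no submodel all of whose states satisfy p
    ¬ ∃ W₁' : Set (Fin 4), (0 : Fin 4) ∈ W₁' ∧
        (∀ y ∈ W₁', y ∈ I₁ ()) ∧
        MonBisim (restrictN N₁ W₁') N₁ (restrictI I₁ W₁') I₁ (inclGraph W₁') := by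
  refine ⟨?_, ⟨by simp, by intro y hy; simpa [I₂] using hy, ?_⟩, ?_⟩
  · intro x y h
    simp only [Set.mem_insert_iff, Set.mem_singleton_iff, Prod.mk.injEq] at h
    rcases h with ⟨hx, hy⟩ | ⟨hx, hy⟩ | ⟨hx, hy⟩ | ⟨hx, hy⟩ <;> subst hx <;> subst hy
    · refine ⟨?_, ?_, by intro p; simp [I₁, I₂]⟩
      · intro a A hA
        simp only [N₁, if_pos rfl, Set.mem_insert_iff, Set.mem_singleton_iff] at hA
        refine ⟨{2}, by simp [N₂], ?_⟩
        intro v hv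
        simp only [Set.mem_singleton_iff] at hv; subst hv
        rcases hA with h | h <;> subst h
        · exact ⟨2, by simp, by simp⟩
        · exact ⟨2, by simp, by simp⟩
      · intro a B hB
        simp only [N₂, if_pos rfl, Set.mem_singleton_iff] at hB
        subst hB
        refine ⟨{2, 3}, by simp [N₁], ?_⟩
        intro u hu
        simp only [Set.mem_insert_iff, Set.mem_singleton_iff] at hu
        rcases hu with h | h <;> subst h
        · exact ⟨2, by simp, by simp⟩
        · exact ⟨2, by simp, by simp⟩
    · exact ⟨by intro a A hA; simp [N₁] at hA, by intro a B hB; simp [N₂] at hB, by intro p; simp [I₁, I₂]⟩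
    · exact ⟨by intro a A hA; simp [N₁] at hA, by intro a B hB; simp [N₂] at hB, by intro p; simp [I₁, I₂]⟩
    · exact ⟨by intro a A hA; simp [N₁] at hA, by intro a B hB; simp [N₂] at hB, by intro p; simp [I₁, I₂]⟩
  · -- inclusion of {0,2} into W₂ is a monotone bisimulation
    rintro x y hxy
    have hx : (x : Fin 3) = y := hxy
    refine ⟨?_, ?_, ?_⟩
    · intro a A hA
      simp only [restrictN, Set.mem_setOf_eq] at hA
      refine ⟨Subtype.val '' A, by rwa [hx] at hA, ?_⟩
      rintro v ⟨u, hu, rfl⟩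
      exact ⟨u, hu, rfl⟩
    · intro a B hB
      simp only [N₂] at hB
      by_cases hy0 : y = 0
      · subst hy0
        simp only [if_pos rfl, Set.mem_singleton_iff] at hB
        subst hB
        have h2 : (2 : Fin 3) ∈ ({0, 2} : Set (Fin 3)) := by simp
        refine ⟨{⟨2, h2⟩}, ?_, ?_⟩
        · simp only [restrictN, Set.mem_setOf_eq, Set.image_singleton, N₂, hx]
          simp
        · intro u hu
          simp only [Set.mem_singleton_iff] at hu; subst hu
          exact ⟨2, by simp, rfl⟩
      · rw [if_neg hy0] at hB; exact absurd hB (Set.notMem_empty B)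
    · intro p
      simp only [restrictI, Set.mem_setOf_eq, hx]
  · rintro ⟨W', h0, hp, hbis⟩
    have h1 : (1 : Fin 4) ∉ W' := by
      intro h
      have := hp 1 h
      simp [I₁] at this
    obtain ⟨-, hback, -⟩ := hbis ⟨0, h0⟩ 0 rfl
    obtain ⟨A, hA, hAall⟩ := hback () {1, 2} (by simp [N₁])
    simp only [restrictN, Set.mem_setOf_eq, N₁, if_pos rfl, Set.mem_insert_iff,
      Set.mem_singleton_iff] at hA
    rcases hA with hA | hA
    · have : (1 : Fin 4) ∈ Subtype.val '' A := by rw [hA]; simp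
      obtain ⟨u, -, hval⟩ := this
      exact h1 (hval ▸ u.2)
    · have : (3 : Fin 4) ∈ Subtype.val '' A := by rw [hA]; simp
      obtain ⟨u, hu, hval⟩ := this
      obtain ⟨v, hv, hg⟩ := hAall u hu
      have : (u : Fin 4) = v := hg
      rw [hval] at this
      subst this
      simp only [Set.mem_insert_iff, Set.mem_singleton_iff] at hv
      rcases hv with h | h <;> exact absurd h (by decide)
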